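/- For a pure state ρ on H₁⊗H₂ with dim H₁ = d₁ ≤ d₂ = dim H₂, written in Bloch representation ρ = (1/(d₁d₂))I⊗I + (1/(2d₂))Σ t¹_{i}λ_i⊗I + (1/(2d₁))Σ t²_{j}I⊗λ_j + (1/4)Σ t¹²_{ij}λ_i⊗λ_j, the two-body correlation tensor satisfies ‖T^{(12)}‖² ≤ 4(d₂²−1)/d₂². -/

import Mathlib

/-!
The identity together with the products `λᵢ ⊗ λⱼ` is an orthogonal system of Hermitian matrices
for the real trace form `⟨A, B⟩ = Re tr(A B)`, with squared norms `d₁ d₂` and `4`. Bessel's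
inequality for `ρ` against this system reads `1 / (d₁ d₂) + ‖T⁽¹²⁾‖² / 4 ≤ tr(ρ²) = 1`, and
`1 / (d₁ d₂) ≥ 1 / d₂²` because `d₁ ≤ d₂`.
-/

open Matrix
open scoped Kronecker ComplexOrder

namespace LinearMap.BilinForm

variable {𝕜 V ι : Type*} [Field 𝕜] [LinearOrder 𝕜] [IsStrictOrderedRing 𝕜]
  [AddCommGroup V] [Module 𝕜 V] [Fintype ι]

/-- Bessel's inequality for a positive semidefinite symmetric bilinear form. Division by zero
makes the terms of isotropic `e i` vanish. -/
theorem iIsOrtho.sum_sq_div_le {B : LinearMap.BilinForm 𝕜 V} (hB : ∀ x, 0 ≤ B x x)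
    (hsymm : B.IsSymm) {e : ι → V} (he : B.iIsOrtho e) (x : V) :
    ∑ i, B x (e i) ^ 2 / B (e i) (e i) ≤ B x x := by
  set a : ι → 𝕜 := fun i => B x (e i) / B (e i) (e i)
  set y := ∑ i, a i • e i
  have hxy : B x y = ∑ i, a i * B x (e i) := by simp [y, mul_comm]
  have hyz : ∀ z, B y z = ∑ i, a i * B (e i) z := fun z => by simp [y]
  have hey : ∀ i, B (e i) y = a i * B (e i) (e i) := fun i => by
    rw [map_sum, Fintype.sum_eq_single i fun j hji => by simp [iIsOrtho_def.1 he i j hji.symm]]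
    simp
  have hyy : B y y = ∑ i, a i * B x (e i) := by
    rw [hyz]
    refine Finset.sum_congr rfl fun i _ => ?_
    by_cases h : B (e i) (e i) = 0 <;> simp [hey, a, h]
  have hnonneg := hB (x - y)
  simp only [sub_left, sub_right, hxy, hsymm.eq y x, hyy] at hnonneg
  calc ∑ i, B x (e i) ^ 2 / B (e i) (e i) = ∑ i, a i * B x (e i) := by
        simp only [a, sq, div_mul_eq_mul_div]
    _ ≤ B x x := by linarith

end LinearMap.BilinForm

namespace Matrix

variable {n : Type*} [Fintype n]

noncomputable def hermitianTraceForm :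
    LinearMap.BilinForm ℝ (selfAdjoint.submodule ℝ (Matrix n n ℂ)) :=
  LinearMap.mk₂ ℝ (fun A B => ((A : Matrix n n ℂ) * B).trace.re)
    (fun A A' B => by simp [add_mul, trace_add])
    (fun c A B => by simp [trace_smul])
    (fun A B B' => by simp [mul_add, trace_add])
    (fun c A B => by simp [trace_smul])

@[simp]
theorem hermitianTraceForm_apply (A B : selfAdjoint.submodule ℝ (Matrix n n ℂ)) :
    hermitianTraceForm A B = ((A : Matrix n n ℂ) * B).trace.re :=
  rfl

theorem hermitianTraceForm_self_nonneg (A : selfAdjoint.submodule ℝ (Matrix n n ℂ)) :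
    0 ≤ hermitianTraceForm A A := by
  have hA : (A : Matrix n n ℂ)ᴴ = A := A.2
  have htrace := (posSemidef_conjTranspose_mul_self (A : Matrix n n ℂ)).trace_nonneg
  rw [hA] at htrace
  exact (Complex.le_def.1 htrace).1

theorem hermitianTraceForm_isSymm : (hermitianTraceForm (n := n)).IsSymm :=
  ⟨fun A B => by rw [hermitianTraceForm_apply, hermitianTraceForm_apply, trace_mul_comm]⟩

variable {m ι κ : Type*} [Fintype m] [DecidableEq m] [DecidableEq n]
  [Fintype ι] [Fintype κ] [DecidableEq ι] [DecidableEq κ]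

theorem re_trace_sq_div_card_add_sum_kronecker_le {ρ : Matrix (m × n) (m × n) ℂ}
    (hρ : ρ.IsHermitian) {A : ι → Matrix m m ℂ} {B : κ → Matrix n n ℂ}
    (hAh : ∀ i, (A i).IsHermitian) (hBh : ∀ j, (B j).IsHermitian) (hAtr : ∀ i, (A i).trace = 0)
    (hA : ∀ i k, (A i * A k).trace = if i = k then 2 else 0)
    (hB : ∀ j l, (B j * B l).trace = if j = l then 2 else 0) :
    ρ.trace.re ^ 2 / (Fintype.card m * Fintype.card n) +
        ∑ i, ∑ j, (ρ * (A i ⊗ₖ B j)).trace.re ^ 2 / 4 ≤ (ρ * ρ).trace.re := by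
  let e : Option (ι × κ) → selfAdjoint.submodule ℝ (Matrix (m × n) (m × n) ℂ)
    | none => ⟨1, .one _⟩
    | some (i, j) => ⟨A i ⊗ₖ B j, by
        change (A i ⊗ₖ B j)ᴴ = _
        rw [conjTranspose_kronecker, hAh i, hBh j]⟩
  have hKK : ∀ i j k l, (A i ⊗ₖ B j * (A k ⊗ₖ B l)).trace =
      (if i = k then 2 else 0) * (if j = l then 2 else 0) := fun i j k l => by
    rw [← mul_kronecker_mul, trace_kronecker, hA, hB]
  have he : hermitianTraceForm.iIsOrtho e := by
    refine LinearMap.BilinForm.iIsOrtho_def.2 ?_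
    rintro (_ | ⟨i, j⟩) (_ | ⟨k, l⟩) hpq
    · exact absurd rfl hpq
    · simp [e, trace_kronecker, hAtr]
    · simp [e, trace_kronecker, hAtr]
    · simp only [ne_eq, Option.some.injEq, Prod.mk.injEq, not_and_or] at hpq
      rcases hpq with h | h <;> simp [e, hKK, h]
  have hbessel := he.sum_sq_div_le hermitianTraceForm_self_nonneg hermitianTraceForm_isSymm
    ⟨ρ, hρ.isSelfAdjoint⟩
  norm_num [Fintype.sum_option, Fintype.sum_prod_type, e, hKK] at hbessel
  exact hbessel

end Matrix

theorem bipartite_pure_correlation_bound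
    (d₁ d₂ : ℕ) (hd₁ : 2 ≤ d₁) (h12 : d₁ ≤ d₂)
    (lam1 : Fin (d₁ ^ 2 - 1) → Matrix (Fin d₁) (Fin d₁) ℂ)
    (lam2 : Fin (d₂ ^ 2 - 1) → Matrix (Fin d₂) (Fin d₂) ℂ)
    (h1herm : ∀ i, (lam1 i).IsHermitian)
    (h1tr : ∀ i, (lam1 i).trace = 0)
    (h1orth : ∀ i j, (lam1 i * lam1 j).trace = if i = j then 2 else 0)
    (h2herm : ∀ i, (lam2 i).IsHermitian)
    (h2orth : ∀ i j, (lam2 i * lam2 j).trace = if i = j then 2 else 0)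
    (ρ : Matrix (Fin d₁ × Fin d₂) (Fin d₁ × Fin d₂) ℂ)
    (hρ : ρ.PosSemidef) (hρtr : ρ.trace = 1) (hpure : ρ * ρ = ρ) :
    ∑ i : Fin (d₁ ^ 2 - 1), ∑ j : Fin (d₂ ^ 2 - 1),
        (Complex.re ((ρ * (lam1 i ⊗ₖ lam2 j)).trace)) ^ 2
      ≤ 4 * ((d₂ : ℝ) ^ 2 - 1) / (d₂ : ℝ) ^ 2 := by
  have hbessel :=
    re_trace_sq_div_card_add_sum_kronecker_le hρ.isHermitian h1herm h2herm h1tr h1orth h2orth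
  simp only [hpure, hρtr, Complex.one_re, one_pow, Fintype.card_fin, ← Finset.sum_div] at hbessel
  have hd₁pos : (0 : ℝ) < d₁ := Nat.cast_pos.2 (by omega)
  have hd₁₂ : (d₁ : ℝ) ≤ d₂ := by exact_mod_cast h12
  have hd₂pos : (0 : ℝ) < d₂ := hd₁pos.trans_le hd₁₂
  have hcard : 1 / (d₂ : ℝ) ^ 2 ≤ 1 / (d₁ * d₂) := by
    rw [sq]
    gcongr
  have hrhs : 4 * ((d₂ : ℝ) ^ 2 - 1) / d₂ ^ 2 = 4 * (1 - 1 / d₂ ^ 2) := by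
    field_simp
  rw [hrhs]
  linarith
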